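/- arXiv:2212.05442 — 4 statements merged into one kernel-verified Lean document; each statement's English description precedes it below -/
import Mathlib

section
/- Let |ψ⟩ ∈ H_A ⊗ H_B, let T be a Hermitian operator on H_B, and let U be a unitary on H_A such that ‖(I_A ⊗ T)|ψ⟩ − (U ⊗ I_B)|ψ⟩‖ ≤ ε. Let T̂ be the regularization of T (defined by T̂ = (T + P)|T + P|⁻¹ where P is the orthogonal projection onto ker T). Then T̂ is unitary and ‖(I ⊗ T̂)|ψ⟩ − (I ⊗ T)|ψ⟩‖ ≤ ε, and consequently ‖(I ⊗ T̂)|ψ⟩ − (U ⊗ I)|ψ⟩‖ ≤ 2ε. -/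
/-!
Diagonalise `T = V D V*`. Conjugation by the unitary `I ⊗ V` preserves norms, so we may replace
`ψ` by `Φ = (I ⊗ V*) ψ` and `T` by `D = diag λ`. Both vectors then split into the slices `Φ_b` of
`Φ` along the eigenbasis, and on each slice
`‖λ_b Φ_b − U Φ_b‖ ≥ |(|λ_b| − 1)| ‖Φ_b‖ = ‖(T̂_b − λ_b) Φ_b‖` since `U` is isometric.
Summing squares gives the second claim and the triangle inequality the third.
Finally `T̂ = f(T)` with `f² = 1`, hence it is unitary.
-/

open scoped Kronecker

/-- The regularization `T̂` of a Hermitian operator `T`: in an eigenbasis of `T`, each nonzero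
eigenvalue is replaced by its sign and each zero eigenvalue by `1`.  This agrees with the
definition `T̂ = (T + P)·|T + P|⁻¹`, where `P` is the orthogonal projection onto `ker T`. -/
noncomputable def regularize {d : ℕ} {T : Matrix (Fin d) (Fin d) ℂ} (hT : T.IsHermitian) :
    Matrix (Fin d) (Fin d) ℂ :=
  (hT.eigenvectorUnitary : Matrix (Fin d) (Fin d) ℂ) *
    Matrix.diagonal (fun i =>
      if hT.eigenvalues i = 0 then 1 else ((Real.sign (hT.eigenvalues i) : ℝ) : ℂ)) *
    star (hT.eigenvectorUnitary : Matrix (Fin d) (Fin d) ℂ)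

open Matrix

noncomputable def signOrOne (c : ℝ) : ℝ := if c = 0 then 1 else Real.sign c

lemma signOrOne_mul_self (c : ℝ) : signOrOne c * signOrOne c = 1 := by
  rcases lt_trichotomy c 0 with hc | rfl | hc
  · simp [signOrOne, hc.ne, Real.sign_of_neg hc]
  · simp [signOrOne]
  · simp [signOrOne, hc.ne', Real.sign_of_pos hc]

lemma abs_signOrOne_sub (c : ℝ) : |signOrOne c - c| = |(|c| - 1)| := by
  rcases lt_trichotomy c 0 with hc | rfl | hc
  · rw [signOrOne, if_neg hc.ne, Real.sign_of_neg hc, abs_of_neg hc]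
    ring_nf
  · simp [signOrOne]
  · rw [signOrOne, if_neg hc.ne', Real.sign_of_pos hc, abs_of_pos hc, abs_sub_comm]

lemma norm_signOrOne_smul_sub_smul_le {𝕜 E : Type*} [RCLike 𝕜] [NormedAddCommGroup E]
    [NormedSpace 𝕜 E] (c : ℝ) {u v : E} (huv : ‖u‖ = ‖v‖) :
    ‖(signOrOne c : 𝕜) • v - (c : 𝕜) • v‖ ≤ ‖(c : 𝕜) • v - u‖ :=
  calc ‖(signOrOne c : 𝕜) • v - (c : 𝕜) • v‖ = |‖(c : 𝕜) • v‖ - ‖u‖| := by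
        rw [← sub_smul, ← RCLike.ofReal_sub, norm_smul, norm_smul, RCLike.norm_ofReal,
          RCLike.norm_ofReal, abs_signOrOne_sub, huv, ← abs_norm v, ← abs_mul, abs_norm,
          sub_one_mul]
    _ ≤ ‖(c : 𝕜) • v - u‖ := abs_norm_sub_norm_le _ _

namespace EuclideanSpace

variable {𝕜 m n : Type*} [RCLike 𝕜]

def slice (Φ : EuclideanSpace 𝕜 (m × n)) (b : n) : EuclideanSpace 𝕜 m :=
  WithLp.toLp 2 fun a => Φ (a, b)

@[simp]
lemma slice_sub (Φ Ψ : EuclideanSpace 𝕜 (m × n)) (b : n) :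
    slice (Φ - Ψ) b = slice Φ b - slice Ψ b :=
  rfl

variable [Fintype m] [Fintype n]

lemma norm_sq_eq_sum_norm_sq_slice (Φ : EuclideanSpace 𝕜 (m × n)) :
    ‖Φ‖ ^ 2 = ∑ b, ‖slice Φ b‖ ^ 2 := by
  simp only [norm_sq_eq, Fintype.sum_prod_type_right, slice]

lemma norm_le_norm_of_forall_slice_le {Φ Ψ : EuclideanSpace 𝕜 (m × n)}
    (h : ∀ b, ‖slice Φ b‖ ≤ ‖slice Ψ b‖) : ‖Φ‖ ≤ ‖Ψ‖ := by
  refine le_of_pow_le_pow_left₀ two_ne_zero (norm_nonneg Ψ) ?_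
  rw [norm_sq_eq_sum_norm_sq_slice, norm_sq_eq_sum_norm_sq_slice]
  exact Finset.sum_le_sum fun b _ => pow_le_pow_left₀ (norm_nonneg _) (h b) 2

variable [DecidableEq m] [DecidableEq n]

lemma slice_toEuclideanLin_one_kronecker_diagonal (d : n → 𝕜) (Φ : EuclideanSpace 𝕜 (m × n))
    (b : n) :
    slice (toEuclideanLin ((1 : Matrix m m 𝕜) ⊗ₖ diagonal d) Φ) b = d b • slice Φ b := by
  ext a
  simp [slice, mulVec, dotProduct, Fintype.sum_prod_type, one_apply, diagonal_apply]

lemma slice_toEuclideanLin_kronecker_one (U : Matrix m m 𝕜) (Φ : EuclideanSpace 𝕜 (m × n))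
    (b : n) :
    slice (toEuclideanLin (U ⊗ₖ (1 : Matrix n n 𝕜)) Φ) b = toEuclideanLin U (slice Φ b) := by
  ext a
  simp [slice, mulVec, dotProduct, Fintype.sum_prod_type, one_apply]

end EuclideanSpace

section Conjugation

variable {𝕜 m n : Type*} [RCLike 𝕜] [Fintype m] [DecidableEq m] [Fintype n]

lemma one_kronecker_conj (V A : Matrix n n 𝕜) :
    (1 : Matrix m m 𝕜) ⊗ₖ (V * A * star V) =
      ((1 : Matrix m m 𝕜) ⊗ₖ V) * ((1 : Matrix m m 𝕜) ⊗ₖ A) * star ((1 : Matrix m m 𝕜) ⊗ₖ V) := by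
  simp only [star_eq_conjTranspose, conjTranspose_kronecker, conjTranspose_one,
    ← mul_kronecker_mul, one_mul]

variable [DecidableEq n]

lemma norm_toEuclideanLin_of_mem_unitaryGroup {W : Matrix n n 𝕜} (hW : W ∈ unitaryGroup n 𝕜)
    (x : EuclideanSpace 𝕜 n) : ‖toEuclideanLin W x‖ = ‖x‖ :=
  ContinuousLinearMap.norm_map_of_mem_unitary
    (Unitary.map_mem (toEuclideanCLM (n := n) (𝕜 := 𝕜)) hW) x

lemma norm_toEuclideanLin_conj_sub {W : Matrix n n 𝕜} (hW : W ∈ unitaryGroup n 𝕜)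
    (A B : Matrix n n 𝕜) (x : EuclideanSpace 𝕜 n) :
    ‖toEuclideanLin (W * A * star W) x - toEuclideanLin (W * B * star W) x‖ =
      ‖toEuclideanLin A (toEuclideanLin (star W) x) -
        toEuclideanLin B (toEuclideanLin (star W) x)‖ := by
  rw [← norm_toEuclideanLin_of_mem_unitaryGroup hW (toEuclideanLin A _ - _), map_sub]
  simp

lemma kronecker_one_eq_conj {V : Matrix n n 𝕜} (hV : V ∈ unitaryGroup n 𝕜) (U : Matrix m m 𝕜) :
    U ⊗ₖ (1 : Matrix n n 𝕜) =
      ((1 : Matrix m m 𝕜) ⊗ₖ V) * (U ⊗ₖ (1 : Matrix n n 𝕜)) * star ((1 : Matrix m m 𝕜) ⊗ₖ V) := by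
  rw [star_eq_conjTranspose, conjTranspose_kronecker, conjTranspose_one, ← mul_kronecker_mul,
    ← mul_kronecker_mul, one_mul, mul_one, mul_one, ← star_eq_conjTranspose,
    mem_unitaryGroup_iff.mp hV]

lemma one_kronecker_cfc {T : Matrix n n 𝕜} (hT : T.IsHermitian) (f : ℝ → ℝ) :
    (1 : Matrix m m 𝕜) ⊗ₖ hT.cfc f =
      ((1 : Matrix m m 𝕜) ⊗ₖ (hT.eigenvectorUnitary : Matrix n n 𝕜)) *
        ((1 : Matrix m m 𝕜) ⊗ₖ diagonal (RCLike.ofReal ∘ f ∘ hT.eigenvalues)) *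
        star ((1 : Matrix m m 𝕜) ⊗ₖ (hT.eigenvectorUnitary : Matrix n n 𝕜)) := by
  rw [← one_kronecker_conj, IsHermitian.cfc, Unitary.conjStarAlgAut_apply]

end Conjugation

lemma norm_one_kronecker_signOrOne_sub_le {𝕜 m n : Type*} [RCLike 𝕜] [Fintype m] [DecidableEq m]
    [Fintype n] [DecidableEq n] {U : Matrix m m 𝕜} (hU : U ∈ unitaryGroup m 𝕜) (lam : n → ℝ)
    (Φ : EuclideanSpace 𝕜 (m × n)) :
    ‖toEuclideanLin ((1 : Matrix m m 𝕜) ⊗ₖ diagonal (RCLike.ofReal ∘ signOrOne ∘ lam)) Φ -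
        toEuclideanLin ((1 : Matrix m m 𝕜) ⊗ₖ diagonal (RCLike.ofReal ∘ lam)) Φ‖ ≤
      ‖toEuclideanLin ((1 : Matrix m m 𝕜) ⊗ₖ diagonal (RCLike.ofReal ∘ lam)) Φ -
        toEuclideanLin (U ⊗ₖ (1 : Matrix n n 𝕜)) Φ‖ := by
  refine EuclideanSpace.norm_le_norm_of_forall_slice_le fun b => ?_
  simp only [EuclideanSpace.slice_sub, EuclideanSpace.slice_toEuclideanLin_one_kronecker_diagonal,
    EuclideanSpace.slice_toEuclideanLin_kronecker_one, Function.comp_apply]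
  exact norm_signOrOne_smul_sub_smul_le _ (norm_toEuclideanLin_of_mem_unitaryGroup hU _)

lemma regularize_eq_cfc {d : ℕ} {T : Matrix (Fin d) (Fin d) ℂ} (hT : T.IsHermitian) :
    regularize hT = hT.cfc signOrOne := by
  rw [IsHermitian.cfc, Unitary.conjStarAlgAut_apply, regularize]
  congr 3
  ext i
  by_cases h : hT.eigenvalues i = 0 <;> simp [signOrOne, h]

lemma regularize_mem_unitaryGroup {d : ℕ} {T : Matrix (Fin d) (Fin d) ℂ} (hT : T.IsHermitian) :
    regularize hT ∈ unitaryGroup (Fin d) ℂ := by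
  rw [regularize_eq_cfc, ← hT.cfc_eq]
  refine (cfc_unitary_iff signOrOne T hT.isSelfAdjoint ?_).2 fun x _ => ?_
  · rw [continuousOn_iff_continuous_domRestrict]
    fun_prop
  · simpa using signOrOne_mul_self x

/-- If `‖(I ⊗ T)ψ − (U ⊗ I)ψ‖ ≤ ε` for a Hermitian `T` and a unitary `U`, then the
regularization `T̂` of `T` is unitary, `‖(I ⊗ T̂)ψ − (I ⊗ T)ψ‖ ≤ ε`, and
`‖(I ⊗ T̂)ψ − (U ⊗ I)ψ‖ ≤ 2ε`. -/
theorem regularize_close {dA dB : ℕ} (ψ : EuclideanSpace ℂ (Fin dA × Fin dB))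
    (T : Matrix (Fin dB) (Fin dB) ℂ) (hT : T.IsHermitian)
    (U : Matrix (Fin dA) (Fin dA) ℂ) (hU : U ∈ Matrix.unitaryGroup (Fin dA) ℂ)
    (ε : ℝ)
    (h : ‖Matrix.toEuclideanLin ((1 : Matrix (Fin dA) (Fin dA) ℂ) ⊗ₖ T) ψ -
          Matrix.toEuclideanLin (U ⊗ₖ (1 : Matrix (Fin dB) (Fin dB) ℂ)) ψ‖ ≤ ε) :
    regularize hT ∈ Matrix.unitaryGroup (Fin dB) ℂ ∧
    ‖Matrix.toEuclideanLin ((1 : Matrix (Fin dA) (Fin dA) ℂ) ⊗ₖ regularize hT) ψ -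
        Matrix.toEuclideanLin ((1 : Matrix (Fin dA) (Fin dA) ℂ) ⊗ₖ T) ψ‖ ≤ ε ∧
    ‖Matrix.toEuclideanLin ((1 : Matrix (Fin dA) (Fin dA) ℂ) ⊗ₖ regularize hT) ψ -
        Matrix.toEuclideanLin (U ⊗ₖ (1 : Matrix (Fin dB) (Fin dB) ℂ)) ψ‖ ≤ 2 * ε := by
  have hV := hT.eigenvectorUnitary.2
  have hW := kronecker_mem_unitary (one_mem (unitaryGroup (Fin dA) ℂ)) hV
  have hT_conj := one_kronecker_cfc (m := Fin dA) hT id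
  rw [← hT.cfc_eq, cfc_id ℝ T, Function.id_comp] at hT_conj
  have hclose : ‖toEuclideanLin ((1 : Matrix (Fin dA) (Fin dA) ℂ) ⊗ₖ regularize hT) ψ -
      toEuclideanLin ((1 : Matrix (Fin dA) (Fin dA) ℂ) ⊗ₖ T) ψ‖ ≤ ε := by
    rw [regularize_eq_cfc, one_kronecker_cfc, hT_conj, norm_toEuclideanLin_conj_sub hW]
    refine (norm_one_kronecker_signOrOne_sub_le hU _ _).trans ?_
    rwa [hT_conj, kronecker_one_eq_conj hV U, norm_toEuclideanLin_conj_sub hW] at h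
  refine ⟨regularize_mem_unitaryGroup hT, hclose, ?_⟩
  calc _ ≤ _ := norm_sub_le_norm_sub_add_norm_sub _
        (toEuclideanLin ((1 : Matrix (Fin dA) (Fin dA) ℂ) ⊗ₖ T) ψ) _
    _ ≤ ε + ε := add_le_add hclose h
    _ = 2 * ε := by ring
end

section
/- Let Σ × Ω be a finite probability space with distribution p(σ,ω) = p_σ(ω)π(σ) where p_σ(ω) = ‖|u_σ^ω⟩‖². Define the random variable N(σ,ω) = ‖|û_σ^ω⟩ − |v̂_σ^ω⟩‖ (the distance between normalized vectors) when p(σ,ω) > 0 and 0 otherwise. If Σ_σ π(σ) Σ_ω ‖|u_σ^ω⟩ − |v_σ^ω⟩‖² ≤ δ², then E(N²) ≤ 4δ². -/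
open Classical

/-- The probability mass `p(σ,ω) = ‖u_σ^ω‖²·π(σ)`. -/
noncomputable def probMass {S Ω : Type*} {d : ℕ} (π : S → ℝ)
    (u : S → Ω → EuclideanSpace ℂ (Fin d)) (x : S × Ω) : ℝ :=
  ‖u x.1 x.2‖ ^ 2 * π x.1

/-- The random variable `N(σ,ω)`: the distance between the normalized versions of
`u_σ^ω` and `v_σ^ω` when `p(σ,ω) > 0`, and `0` otherwise. -/
noncomputable def normDistRV {S Ω : Type*} {d : ℕ} (π : S → ℝ)
    (u v : S → Ω → EuclideanSpace ℂ (Fin d)) (x : S × Ω) : ℝ :=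
  if 0 < probMass π u x then
    ‖(‖u x.1 x.2‖⁻¹ • u x.1 x.2) - (‖v x.1 x.2‖⁻¹ • v x.1 x.2)‖
  else 0

lemma key_est {d : ℕ} (a b : EuclideanSpace ℂ (Fin d)) (ha : a ≠ 0) (hb : b ≠ 0) :
    ‖a - ‖a‖ • (‖b‖⁻¹ • b)‖ ≤ 2 * ‖a - b‖ := by
  have hbn : (0:ℝ) < ‖b‖ := norm_pos_iff.mpr hb
  have h1 : ‖a - ‖a‖ • (‖b‖⁻¹ • b)‖ ≤ ‖a - b‖ + ‖b - ‖a‖ • (‖b‖⁻¹ • b)‖ := by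
    have := norm_sub_le_norm_sub_add_norm_sub a b (‖a‖ • (‖b‖⁻¹ • b))
    linarith [this]
  have h2 : ‖b - ‖a‖ • (‖b‖⁻¹ • b)‖ = |‖b‖ - ‖a‖| := by
    have : b - ‖a‖ • (‖b‖⁻¹ • b) = ((‖b‖ - ‖a‖) * ‖b‖⁻¹ : ℝ) • b := by
      rw [smul_smul, sub_mul, sub_smul, mul_inv_cancel₀ (ne_of_gt hbn), one_smul]
    rw [this, norm_smul]
    simp [abs_mul, abs_inv, abs_of_pos hbn, mul_assoc,
      inv_mul_cancel₀ (ne_of_gt hbn)]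
  have h3 : |‖b‖ - ‖a‖| ≤ ‖a - b‖ := by
    rw [abs_sub_comm]
    exact (abs_norm_sub_norm_le a b).trans (le_of_eq rfl)
  linarith

/-- if `Σ_σ π(σ) Σ_ω ‖u_σ^ω − v_σ^ω‖² ≤ δ²`, then `E(N²) ≤ 4δ²` with respect to
the distribution `p(σ,ω) = ‖u_σ^ω‖²·π(σ)`. -/
theorem expected_normDist_sq_le {S Ω : Type*} [Fintype S] [Fintype Ω] {d : ℕ}
    (π : S → ℝ) (hπ0 : ∀ σ, 0 ≤ π σ) (hπ1 : ∑ σ, π σ = 1)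
    (u : S → Ω → EuclideanSpace ℂ (Fin d))
    (hu : ∀ σ, ∑ ω, ‖u σ ω‖ ^ 2 = 1)
    (v : S → Ω → EuclideanSpace ℂ (Fin d))
    (hv : ∀ x : S × Ω, 0 < probMass π u x → v x.1 x.2 ≠ 0)
    (δ : ℝ)
    (hsum : ∑ σ, π σ * ∑ ω, ‖u σ ω - v σ ω‖ ^ 2 ≤ δ ^ 2) :
    ∑ x : S × Ω, probMass π u x * normDistRV π u v x ^ 2 ≤ 4 * δ ^ 2 := by
  have key : ∀ x : S × Ω, probMass π u x * normDistRV π u v x ^ 2 ≤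
      4 * (π x.1 * ‖u x.1 x.2 - v x.1 x.2‖ ^ 2) := by
    intro x
    by_cases hp : 0 < probMass π u x
    · have hun : (0:ℝ) < ‖u x.1 x.2‖ := by
        by_contra h
        push_neg at h
        have : ‖u x.1 x.2‖ = 0 := le_antisymm h (norm_nonneg _)
        simp [probMass, this] at hp
      have hune : u x.1 x.2 ≠ 0 := norm_pos_iff.mp hun
      have hvne := hv x hp
      rw [normDistRV, if_pos hp, probMass]
      have hnorm : ‖u x.1 x.2‖ * ‖(‖u x.1 x.2‖⁻¹ • u x.1 x.2) - (‖v x.1 x.2‖⁻¹ • v x.1 x.2)‖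
          = ‖u x.1 x.2 - ‖u x.1 x.2‖ • (‖v x.1 x.2‖⁻¹ • v x.1 x.2)‖ := by
        rw [← norm_smul_of_nonneg (le_of_lt hun), smul_sub, smul_smul,
          mul_inv_cancel₀ (ne_of_gt hun), one_smul]
      have hle := key_est (u x.1 x.2) (v x.1 x.2) hune hvne
      have h2 : ‖u x.1 x.2‖ * ‖(‖u x.1 x.2‖⁻¹ • u x.1 x.2) - (‖v x.1 x.2‖⁻¹ • v x.1 x.2)‖
          ≤ 2 * ‖u x.1 x.2 - v x.1 x.2‖ := by rw [hnorm]; exact hle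
      have hπx : 0 < π x.1 := by
        by_contra h
        push_neg at h
        have : π x.1 = 0 := le_antisymm h (hπ0 _)
        simp [probMass, this] at hp
      have hsq : (‖u x.1 x.2‖ * ‖(‖u x.1 x.2‖⁻¹ • u x.1 x.2) - (‖v x.1 x.2‖⁻¹ • v x.1 x.2)‖)^2
          ≤ (2 * ‖u x.1 x.2 - v x.1 x.2‖)^2 := by
        apply sq_le_sq'
        · nlinarith [norm_nonneg (u x.1 x.2 - v x.1 x.2), mul_nonneg (le_of_lt hun)
            (norm_nonneg ((‖u x.1 x.2‖⁻¹ • u x.1 x.2) - (‖v x.1 x.2‖⁻¹ • v x.1 x.2)))]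
        · exact h2
      nlinarith [hsq, hπ0 x.1]
    · rw [normDistRV, if_neg hp]
      have := mul_nonneg (hπ0 x.1) (sq_nonneg ‖u x.1 x.2 - v x.1 x.2‖)
      nlinarith
  calc ∑ x : S × Ω, probMass π u x * normDistRV π u v x ^ 2
      ≤ ∑ x : S × Ω, 4 * (π x.1 * ‖u x.1 x.2 - v x.1 x.2‖ ^ 2) :=
        Finset.sum_le_sum fun x _ => key x
    _ = 4 * ∑ σ, π σ * ∑ ω, ‖u σ ω - v σ ω‖ ^ 2 := by
        rw [← Finset.mul_sum, Fintype.sum_prod_type]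
        congr 1
        exact Finset.sum_congr rfl fun σ _ => by rw [Finset.mul_sum]
    _ ≤ 4 * δ ^ 2 := by linarith
end

section
/- Let V: H → H' be an isometry, {M_a}_{a∈{0,1}ⁿ} a projective measurement on H, |ψ⟩ ∈ H a unit vector, |ψ'⟩ ∈ H' a unit vector, and {M'_a}_{a∈{0,1}ⁿ} a projective measurement on H'. For s ∈ {0,1}ⁿ define M^s = Σ_a (−1)^{a·s} M_a and M'^s = Σ_a (−1)^{a·s} M'_a. If ‖V M^s |ψ⟩ − M'^s |ψ'⟩‖ ≤ δ for all s ∈ {0,1}ⁿ, then Σ_{a∈{0,1}ⁿ} ‖V M_a |ψ⟩ − M'_a |ψ'⟩‖² ≤ δ². -/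
/-!
Writing `f a = V M_a ψ - M'_a ψ'`, the vector `V M^s ψ - M'^s ψ'` is the Walsh–Hadamard transform
`Σ_a (−1)^{a·s} f a` of `f`. The characters `s ↦ (−1)^{a·s}` are orthogonal, so Parseval gives
`Σ_s ‖Σ_a (−1)^{a·s} f a‖² = 2ⁿ Σ_a ‖f a‖²`; the left side is at most `2ⁿ δ²`.
-/

/-- The number of positions at which both bit strings are `1` (so that
`(−1)^(dotCount a s)` is the sign `(−1)^{a·s}`). -/
def dotCount {n : ℕ} (a s : Fin n → Bool) : ℕ :=
  ∑ j, if a j && s j then 1 else 0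

/-- The observable `M^s = Σ_a (−1)^{a·s} M_a`. -/
noncomputable def obsOf {n d : ℕ} (M : (Fin n → Bool) → Matrix (Fin d) (Fin d) ℂ)
    (s : Fin n → Bool) : Matrix (Fin d) (Fin d) ℂ :=
  ∑ a, ((-1 : ℂ) ^ dotCount a s) • M a

open Finset

variable {n : ℕ}

def walsh (R : Type*) {E : Type*} [Ring R] [AddCommGroup E] [Module R E]
    (f : (Fin n → Bool) → E) (s : Fin n → Bool) : E :=
  ∑ a, ((-1 : R) ^ dotCount a s) • f a

lemma obsOf_eq_walsh {d : ℕ} (M : (Fin n → Bool) → Matrix (Fin d) (Fin d) ℂ) :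
    obsOf M = walsh ℂ M :=
  rfl

lemma neg_one_pow_dotCount {R : Type*} [CommMonoid R] [HasDistribNeg R] (a s : Fin n → Bool) :
    (-1 : R) ^ dotCount a s = ∏ j, if a j && s j then -1 else 1 := by
  rw [dotCount, ← prod_pow_eq_pow_sum]
  refine prod_congr rfl fun j _ => ?_
  split_ifs <;> simp

lemma sum_neg_one_pow_dotCount_mul {R : Type*} [CommRing R] (a b : Fin n → Bool) :
    ∑ s : Fin n → Bool, (-1 : R) ^ dotCount a s * (-1 : R) ^ dotCount b s
      = if a = b then 2 ^ n else 0 := by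
  have factor (j : Fin n) :
      ∑ x : Bool, (if a j && x then (-1 : R) else 1) * (if b j && x then -1 else 1)
        = if a j = b j then 2 else 0 := by
    cases a j <;> cases b j <;> norm_num
  -- The summand factors over the coordinates, so the sum over `s` is a product of one-bit sums.
  simp only [neg_one_pow_dotCount, ← prod_mul_distrib]
  rw [← Fintype.prod_sum fun j x => (if a j && x then (-1 : R) else 1) *
    (if b j && x then -1 else 1)]
  simp only [factor]
  split_ifs with hab
  · simp [hab]
  · obtain ⟨j, hj⟩ := Function.ne_iff.mp hab
    exact prod_eq_zero (mem_univ j) (if_neg hj)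

section Parseval

variable {𝕜 E : Type*} [RCLike 𝕜] [NormedAddCommGroup E] [InnerProductSpace 𝕜 E]

lemma inner_walsh_self (f : (Fin n → Bool) → E) (s : Fin n → Bool) :
    inner 𝕜 (walsh 𝕜 f s) (walsh 𝕜 f s)
      = ∑ a, ∑ b, (-1 : 𝕜) ^ dotCount a s * (-1 : 𝕜) ^ dotCount b s * inner 𝕜 (f a) (f b) := by
  rw [walsh, sum_inner]
  refine sum_congr rfl fun a _ => ?_
  rw [inner_smul_left, inner_sum, mul_sum]
  refine sum_congr rfl fun b _ => ?_
  simp only [inner_smul_right, map_pow, map_neg, map_one, mul_assoc]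

lemma sum_inner_walsh_self (f : (Fin n → Bool) → E) :
    ∑ s, inner 𝕜 (walsh 𝕜 f s) (walsh 𝕜 f s) = 2 ^ n * ∑ a, inner 𝕜 (f a) (f a) := by
  calc ∑ s, inner 𝕜 (walsh 𝕜 f s) (walsh 𝕜 f s)
      = ∑ a, ∑ b, (∑ s : Fin n → Bool, (-1 : 𝕜) ^ dotCount a s * (-1 : 𝕜) ^ dotCount b s)
          * inner 𝕜 (f a) (f b) := by
        simp only [inner_walsh_self, sum_mul]
        rw [sum_comm]
        exact sum_congr rfl fun a _ => sum_comm
    _ = ∑ a, 2 ^ n * inner 𝕜 (f a) (f a) := by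
        simp [sum_neg_one_pow_dotCount_mul, ite_mul]
    _ = 2 ^ n * ∑ a, inner 𝕜 (f a) (f a) := (mul_sum ..).symm

theorem sum_norm_walsh_sq (f : (Fin n → Bool) → E) :
    ∑ s, ‖walsh 𝕜 f s‖ ^ 2 = 2 ^ n * ∑ a, ‖f a‖ ^ 2 := by
  have := congrArg RCLike.re (sum_inner_walsh_self (𝕜 := 𝕜) f)
  have two_pow : (2 : 𝕜) ^ n = ((2 ^ n : ℝ) : 𝕜) := by push_cast; rfl
  simpa [inner_self_eq_norm_sq, map_sum, two_pow, RCLike.re_ofReal_mul] using this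

end Parseval

theorem sum_proj_dist_sq_le_general {n d d' : ℕ}
    (V : Matrix (Fin d') (Fin d) ℂ)
    (M : (Fin n → Bool) → Matrix (Fin d) (Fin d) ℂ)
    (ψ : EuclideanSpace ℂ (Fin d))
    (M' : (Fin n → Bool) → Matrix (Fin d') (Fin d') ℂ)
    (ψ' : EuclideanSpace ℂ (Fin d'))
    (δ : ℝ)
    (h : ∀ s : Fin n → Bool,
      ‖Matrix.toEuclideanLin (V * obsOf M s) ψ - Matrix.toEuclideanLin (obsOf M' s) ψ'‖ ≤ δ) :
    ∑ a : Fin n → Bool,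
        ‖Matrix.toEuclideanLin (V * M a) ψ - Matrix.toEuclideanLin (M' a) ψ'‖ ^ 2 ≤ δ ^ 2 := by
  set f := fun a => Matrix.toEuclideanLin (V * M a) ψ - Matrix.toEuclideanLin (M' a) ψ'
  have hwalsh (s : Fin n → Bool) : walsh ℂ f s =
      Matrix.toEuclideanLin (V * obsOf M s) ψ - Matrix.toEuclideanLin (obsOf M' s) ψ' := by
    simp only [f, obsOf_eq_walsh, walsh, Matrix.mul_sum, Matrix.mul_smul, map_sum, map_smul,
      LinearMap.sum_apply, LinearMap.smul_apply, smul_sub, sum_sub_distrib]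
  have hbound : ∑ s, ‖walsh ℂ f s‖ ^ 2 ≤ 2 ^ n * δ ^ 2 := by
    calc ∑ s, ‖walsh ℂ f s‖ ^ 2 ≤ ∑ _s : Fin n → Bool, δ ^ 2 :=
          sum_le_sum fun s _ => pow_le_pow_left₀ (norm_nonneg _) (hwalsh s ▸ h s) 2
      _ = 2 ^ n * δ ^ 2 := by simp
  rw [sum_norm_walsh_sq] at hbound
  exact le_of_mul_le_mul_left hbound (by positivity)

/-- if `‖V M^s ψ − M'^s ψ'‖ ≤ δ` for all `s ∈ {0,1}ⁿ`, then
`Σ_a ‖V M_a ψ − M'_a ψ'‖² ≤ δ²`. -/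
theorem sum_proj_dist_sq_le {n d d' : ℕ}
    (V : Matrix (Fin d') (Fin d) ℂ) (hV : V.conjTranspose * V = 1)
    (M : (Fin n → Bool) → Matrix (Fin d) (Fin d) ℂ)
    (hMherm : ∀ a, (M a).IsHermitian) (hMproj : ∀ a, M a * M a = M a)
    (hMsum : ∑ a, M a = 1)
    (ψ : EuclideanSpace ℂ (Fin d)) (hψ : ‖ψ‖ = 1)
    (M' : (Fin n → Bool) → Matrix (Fin d') (Fin d') ℂ)
    (hM'herm : ∀ a, (M' a).IsHermitian) (hM'proj : ∀ a, M' a * M' a = M' a)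
    (hM'sum : ∑ a, M' a = 1)
    (ψ' : EuclideanSpace ℂ (Fin d')) (hψ' : ‖ψ'‖ = 1)
    (δ : ℝ)
    (h : ∀ s : Fin n → Bool,
      ‖Matrix.toEuclideanLin (V * obsOf M s) ψ - Matrix.toEuclideanLin (obsOf M' s) ψ'‖ ≤ δ) :
    ∑ a : Fin n → Bool,
        ‖Matrix.toEuclideanLin (V * M a) ψ - Matrix.toEuclideanLin (M' a) ψ'‖ ^ 2 ≤ δ ^ 2 :=
  sum_proj_dist_sq_le_general V M ψ M' ψ' δ h
end

section
/- Let H_A ⊗ H_B and H̃_A ⊗ H̃_B be Hilbert spaces, |ψ⟩ ∈ H_A ⊗ H_B and |φ⟩ ∈ H̃_A ⊗ H̃_B, m > 1, operators A_j on H_A with ‖A_j‖ ≤ 1 and Ã_j on H̃_A for j = 1,…,m. Let V = V_A ⊗ V_B be a local isometry (V_A: H_A → H̃_A, V_B: H_B → H̃_B) with ‖V|ψ⟩ − |φ⟩‖ ≤ δ and ‖V(A_j ⊗ I)|ψ⟩ − (Ã_j ⊗ I)|φ⟩‖ ≤ δ for all j. Suppose for each j there exists B̃_j on H̃_B with ‖B̃_j‖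 ≤ 1 such that (Ã_j ⊗ I)|φ⟩ = (I ⊗ B̃_j)|φ⟩. Then ‖V(A₁⋯A_m ⊗ I)|ψ⟩ − (Ã₁⋯Ã_m ⊗ I)|φ⟩‖ ≤ (2m + 1)δ. -/
/-!
Write `V = V_A ⊗ V_B` and measure how far `X ⊗ I` acting on `ψ` is from `I ⊗ Y` acting on `Vψ`
by the defect `‖V (X ⊗ I) ψ - (I ⊗ Y) V ψ‖`. Since `V_A` is an isometry,
`V (X P ⊗ I) = (V_A X V_A† ⊗ I) V (P ⊗ I)`, and `V_A X V_A† ⊗ I` is a contraction commuting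
with `I ⊗ Q`; hence the defect of `(X P, Q Y)` is at most the defect of `(P, Q)` plus that of
`(X, Y)`. Routing through `(Ã_j ⊗ I) φ = (I ⊗ B̃_j) φ`, each `(A_j, B̃_j)` has defect at most
`2δ`, so `(A₁⋯A_m, B̃_m⋯B̃₁)` has defect at most `2mδ`. Finally
`(Ã₁⋯Ã_m ⊗ I) φ = (I ⊗ B̃_m⋯B̃₁) φ`, and trading `Vψ` for `φ` costs one more `δ`.
-/

open scoped Kronecker Matrix.Norms.L2Operator
open Matrix WithLp

theorem List.norm_prod_le_one {R : Type*} [SeminormedRing R] (h1 : ‖(1 : R)‖ ≤ 1) :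
    ∀ {L : List R}, (∀ a ∈ L, ‖a‖ ≤ 1) → ‖L.prod‖ ≤ 1
  | [], _ => h1
  | a :: L, hL => by
    rw [List.prod_cons]
    exact (norm_mul_le _ _).trans <| mul_le_one₀ (hL a List.mem_cons_self) (norm_nonneg _)
      (List.norm_prod_le_one h1 fun b hb => hL b (List.mem_cons_of_mem a hb))

variable {𝕜 : Type*} [RCLike 𝕜]

namespace Matrix

section L2OpNorm

variable {l m n : Type*} [Fintype l] [Fintype n]

theorem sq_norm_eq_sum_sq_norm_curry (x : EuclideanSpace 𝕜 (l × n)) :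
    ‖x‖ ^ 2 = ∑ i, ‖toLp 2 (fun j => x (i, j))‖ ^ 2 := by
  simp only [EuclideanSpace.norm_sq_eq, Fintype.sum_prod_type]

theorem sq_norm_eq_sum_sq_norm_curry_swap (x : EuclideanSpace 𝕜 (l × n)) :
    ‖x‖ ^ 2 = ∑ j, ‖toLp 2 (fun i => x (i, j))‖ ^ 2 := by
  simp only [EuclideanSpace.norm_sq_eq, Fintype.sum_prod_type_right]

variable [DecidableEq l] [DecidableEq n]

theorem toEuclideanLin_one_kronecker_curry (M : Matrix m n 𝕜) (x : EuclideanSpace 𝕜 (l × n))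
    (i : l) :
    toLp 2 (fun c => toEuclideanLin ((1 : Matrix l l 𝕜) ⊗ₖ M) x (i, c)) =
      toEuclideanLin M (toLp 2 fun d => x (i, d)) := by
  ext c
  simp [toLpLin_apply, mulVec, dotProduct, one_apply, Fintype.sum_prod_type, ite_mul]

theorem toEuclideanLin_kronecker_one_curry_swap (M : Matrix m n 𝕜)
    (x : EuclideanSpace 𝕜 (n × l)) (i : l) :
    toLp 2 (fun c => toEuclideanLin (M ⊗ₖ (1 : Matrix l l 𝕜)) x (c, i)) =
      toEuclideanLin M (toLp 2 fun d => x (d, i)) := by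
  ext c
  simp [toLpLin_apply, mulVec, dotProduct, one_apply, Fintype.sum_prod_type, mul_ite]

theorem commute_kronecker_one_one_kronecker (X : Matrix l l 𝕜) (Y : Matrix n n 𝕜) :
    Commute (X ⊗ₖ (1 : Matrix n n 𝕜)) ((1 : Matrix l l 𝕜) ⊗ₖ Y) := by
  simp only [Commute, SemiconjBy, ← mul_kronecker_mul, Matrix.mul_one, Matrix.one_mul]

variable [Fintype m]

theorem norm_toEuclideanLin_apply_le (M : Matrix m n 𝕜) (x : EuclideanSpace 𝕜 n) :
    ‖toEuclideanLin M x‖ ≤ ‖M‖ * ‖x‖ :=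
  M.l2_opNorm_mulVec x

theorem norm_toEuclideanLin_apply_le_of_l2_opNorm_le_one {M : Matrix m n 𝕜} (hM : ‖M‖ ≤ 1)
    (x : EuclideanSpace 𝕜 n) : ‖toEuclideanLin M x‖ ≤ ‖x‖ :=
  (M.norm_toEuclideanLin_apply_le x).trans (mul_le_of_le_one_left (norm_nonneg x) hM)

theorem l2_opNorm_one_le : ‖(1 : Matrix n n 𝕜)‖ ≤ 1 := by
  rw [cstar_norm_def, map_one]
  exact ContinuousLinearMap.norm_id_le

theorem l2_opNorm_le_one_of_conjTranspose_mul_self_eq_one {V : Matrix m n 𝕜} (hV : Vᴴ * V = 1) :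
    ‖V‖ ≤ 1 := by
  have h : ‖V‖ * ‖V‖ ≤ 1 := by
    rw [← l2_opNorm_conjTranspose_mul_self, hV]
    exact l2_opNorm_one_le
  nlinarith [norm_nonneg V]

theorem l2_opNorm_one_kronecker_le (M : Matrix m n 𝕜) : ‖(1 : Matrix l l 𝕜) ⊗ₖ M‖ ≤ ‖M‖ := by
  refine ContinuousLinearMap.opNorm_le_bound _ (norm_nonneg M) fun x => ?_
  refine (sq_le_sq₀ (norm_nonneg _) (by positivity)).mp ?_
  rw [mul_pow, sq_norm_eq_sum_sq_norm_curry, sq_norm_eq_sum_sq_norm_curry x, Finset.mul_sum]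
  gcongr with i
  rw [← mul_pow]
  gcongr
  exact (toEuclideanLin_one_kronecker_curry M x i).symm ▸ norm_toEuclideanLin_apply_le M _

theorem l2_opNorm_kronecker_one_le (M : Matrix m n 𝕜) : ‖M ⊗ₖ (1 : Matrix l l 𝕜)‖ ≤ ‖M‖ := by
  refine ContinuousLinearMap.opNorm_le_bound _ (norm_nonneg M) fun x => ?_
  refine (sq_le_sq₀ (norm_nonneg _) (by positivity)).mp ?_
  rw [mul_pow, sq_norm_eq_sum_sq_norm_curry_swap, sq_norm_eq_sum_sq_norm_curry_swap x,
    Finset.mul_sum]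
  gcongr with i
  rw [← mul_pow]
  gcongr
  exact (toEuclideanLin_kronecker_one_curry_swap M x i).symm ▸ norm_toEuclideanLin_apply_le M _

end L2OpNorm

end Matrix

section LocalIsometry

variable {α β α' β' : Type*} [Fintype α] [Fintype β] [Fintype α'] [Fintype β']
  [DecidableEq α] [DecidableEq β] [DecidableEq α'] [DecidableEq β']

noncomputable def transferDefect (V : Matrix (α' × β') (α × β) 𝕜) (X : Matrix α α 𝕜)
    (Y : Matrix β' β' 𝕜) (ψ : EuclideanSpace 𝕜 (α × β)) : ℝ :=
  ‖toEuclideanLin (V * (X ⊗ₖ (1 : Matrix β β 𝕜)) - ((1 : Matrix α' α' 𝕜) ⊗ₖ Y) * V) ψ‖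

theorem abs_norm_sub_sub_transferDefect_le (V : Matrix (α' × β') (α × β) 𝕜)
    (X : Matrix α α 𝕜) {Y : Matrix β' β' 𝕜} (hY : ‖Y‖ ≤ 1) (ψ : EuclideanSpace 𝕜 (α × β))
    (φ : EuclideanSpace 𝕜 (α' × β')) :
    |‖toEuclideanLin (V * (X ⊗ₖ (1 : Matrix β β 𝕜))) ψ -
        toEuclideanLin ((1 : Matrix α' α' 𝕜) ⊗ₖ Y) φ‖ - transferDefect V X Y ψ| ≤
      ‖toEuclideanLin V ψ - φ‖ := by
  rw [transferDefect, map_sub, LinearMap.sub_apply]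
  simp only [toLpLin_mul_same, LinearMap.comp_apply]
  refine (abs_norm_sub_norm_le _ _).trans ?_
  rw [sub_sub_sub_cancel_left, ← map_sub]
  exact norm_toEuclideanLin_apply_le_of_l2_opNorm_le_one ((l2_opNorm_one_kronecker_le Y).trans hY) _

theorem transferDefect_le_of_approx {V : Matrix (α' × β') (α × β) 𝕜} {X : Matrix α α 𝕜}
    {Xt : Matrix α' α' 𝕜} {Y : Matrix β' β' 𝕜} (hY : ‖Y‖ ≤ 1) {ψ : EuclideanSpace 𝕜 (α × β)}
    {φ : EuclideanSpace 𝕜 (α' × β')} {δ : ℝ}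
    (hstate : ‖toEuclideanLin V ψ - φ‖ ≤ δ)
    (hobs : ‖toEuclideanLin (V * (X ⊗ₖ (1 : Matrix β β 𝕜))) ψ -
      toEuclideanLin (Xt ⊗ₖ (1 : Matrix β' β' 𝕜)) φ‖ ≤ δ)
    (hact : toEuclideanLin (Xt ⊗ₖ (1 : Matrix β' β' 𝕜)) φ =
      toEuclideanLin ((1 : Matrix α' α' 𝕜) ⊗ₖ Y) φ) :
    transferDefect V X Y ψ ≤ 2 * δ := by
  have h := (abs_sub_le_iff.mp (abs_norm_sub_sub_transferDefect_le V X hY ψ φ)).2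
  rw [← hact] at h
  linarith

theorem Matrix.kronecker_mul_sub_mul_kronecker_eq {VA : Matrix α' α 𝕜} (VB : Matrix β' β 𝕜)
    (hVA : VAᴴ * VA = 1) (X P : Matrix α α 𝕜) (Q Y : Matrix β' β' 𝕜) :
    (VA ⊗ₖ VB) * ((X * P) ⊗ₖ (1 : Matrix β β 𝕜)) -
        ((1 : Matrix α' α' 𝕜) ⊗ₖ (Q * Y)) * (VA ⊗ₖ VB) =
      ((VA * X * VAᴴ) ⊗ₖ (1 : Matrix β' β' 𝕜)) *
          ((VA ⊗ₖ VB) * (P ⊗ₖ (1 : Matrix β β 𝕜)) - ((1 : Matrix α' α' 𝕜) ⊗ₖ Q) * (VA ⊗ₖ VB)) +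
        ((1 : Matrix α' α' 𝕜) ⊗ₖ Q) *
          ((VA ⊗ₖ VB) * (X ⊗ₖ (1 : Matrix β β 𝕜)) - ((1 : Matrix α' α' 𝕜) ⊗ₖ Y) * (VA ⊗ₖ VB)) := by
  have hVA' (N : Matrix α α 𝕜) : VAᴴ * (VA * N) = N := by rw [← Matrix.mul_assoc, hVA, one_mul]
  simp only [Matrix.mul_sub, ← mul_kronecker_mul, Matrix.mul_one, Matrix.one_mul,
    Matrix.mul_assoc, hVA, hVA']
  abel

theorem transferDefect_mul_mul_le {VA : Matrix α' α 𝕜} (VB : Matrix β' β 𝕜)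
    (hVA : VAᴴ * VA = 1) {X : Matrix α α 𝕜} (hX : ‖X‖ ≤ 1) (P : Matrix α α 𝕜)
    {Q : Matrix β' β' 𝕜} (hQ : ‖Q‖ ≤ 1) (Y : Matrix β' β' 𝕜) (ψ : EuclideanSpace 𝕜 (α × β)) :
    transferDefect (VA ⊗ₖ VB) (X * P) (Q * Y) ψ ≤
      transferDefect (VA ⊗ₖ VB) P Q ψ + transferDefect (VA ⊗ₖ VB) X Y ψ := by
  have hΦ : ‖(VA * X * VAᴴ) ⊗ₖ (1 : Matrix β' β' 𝕜)‖ ≤ 1 := by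
    have hV := l2_opNorm_le_one_of_conjTranspose_mul_self_eq_one hVA
    have hVH : ‖VAᴴ‖ ≤ 1 := (l2_opNorm_conjTranspose VA).trans_le hV
    calc _ ≤ ‖VA * X * VAᴴ‖ := l2_opNorm_kronecker_one_le _
      _ ≤ ‖VA‖ * ‖X‖ * ‖VAᴴ‖ := (l2_opNorm_mul _ _).trans <| by gcongr; exact l2_opNorm_mul _ _
      _ ≤ 1 := mul_le_one₀ (mul_le_one₀ hV (norm_nonneg _) hX) (norm_nonneg _) hVH
  have h1Q : ‖(1 : Matrix α' α' 𝕜) ⊗ₖ Q‖ ≤ 1 := (l2_opNorm_one_kronecker_le Q).trans hQ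
  rw [transferDefect, kronecker_mul_sub_mul_kronecker_eq VB hVA, map_add, LinearMap.add_apply,
    toLpLin_mul_same, toLpLin_mul_same, LinearMap.comp_apply, LinearMap.comp_apply]
  exact (norm_add_le _ _).trans <| add_le_add
    (norm_toEuclideanLin_apply_le_of_l2_opNorm_le_one hΦ _)
    (norm_toEuclideanLin_apply_le_of_l2_opNorm_le_one h1Q _)

theorem transferDefect_list_prod_le {ι : Type*} {VA : Matrix α' α 𝕜} (VB : Matrix β' β 𝕜)
    (hVA : VAᴴ * VA = 1) (A : ι → Matrix α α 𝕜) (B : ι → Matrix β' β' 𝕜)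
    (ψ : EuclideanSpace 𝕜 (α × β)) {ε : ℝ} :
    ∀ {L : List ι}, (∀ j ∈ L, ‖A j‖ ≤ 1) → (∀ j ∈ L, ‖B j‖ ≤ 1) →
      (∀ j ∈ L, transferDefect (VA ⊗ₖ VB) (A j) (B j) ψ ≤ ε) →
      transferDefect (VA ⊗ₖ VB) (L.map A).prod (L.reverse.map B).prod ψ ≤ L.length * ε
  | [], _, _, _ => by simp [transferDefect]
  | j :: L, hA, hB, hε => by
    have hQ : ‖(L.reverse.map B).prod‖ ≤ 1 :=
      List.norm_prod_le_one l2_opNorm_one_le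
        (by simpa using fun i hi => hB i (List.mem_cons_of_mem j hi))
    have ih := transferDefect_list_prod_le VB hVA A B ψ
      (fun i hi => hA i (List.mem_cons_of_mem j hi)) (fun i hi => hB i (List.mem_cons_of_mem j hi))
      (fun i hi => hε i (List.mem_cons_of_mem j hi))
    rw [List.map_cons, List.prod_cons, List.reverse_cons, List.map_append, List.prod_append,
      List.map_singleton, List.prod_singleton, List.length_cons, Nat.cast_succ, add_mul, one_mul]
    exact (transferDefect_mul_mul_le VB hVA (hA j List.mem_cons_self) _ hQ _ ψ).trans
      (add_le_add ih (hε j List.mem_cons_self))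

theorem toEuclideanLin_list_prod_kronecker_one_apply {ι : Type*} (At : ι → Matrix α' α' 𝕜)
    (B : ι → Matrix β' β' 𝕜) (φ : EuclideanSpace 𝕜 (α' × β')) :
    ∀ {L : List ι}, (∀ j ∈ L, toEuclideanLin (At j ⊗ₖ (1 : Matrix β' β' 𝕜)) φ =
        toEuclideanLin ((1 : Matrix α' α' 𝕜) ⊗ₖ B j) φ) →
      toEuclideanLin ((L.map At).prod ⊗ₖ (1 : Matrix β' β' 𝕜)) φ =
        toEuclideanLin ((1 : Matrix α' α' 𝕜) ⊗ₖ (L.reverse.map B).prod) φ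
  | [], _ => rfl
  | j :: L, hact => by
    have ih := toEuclideanLin_list_prod_kronecker_one_apply At B φ
      fun i hi => hact i (List.mem_cons_of_mem j hi)
    have hcomm := (commute_kronecker_one_one_kronecker (At j) (L.reverse.map B).prod).eq
    rw [List.map_cons, List.prod_cons, List.reverse_cons, List.map_append, List.prod_append,
      List.map_singleton, List.prod_singleton, ← Matrix.one_mul (1 : Matrix β' β' 𝕜),
      mul_kronecker_mul, ← Matrix.one_mul (1 : Matrix α' α' 𝕜), mul_kronecker_mul]
    simp only [toLpLin_mul_same, LinearMap.comp_apply]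
    rw [ih, ← LinearMap.comp_apply, ← toLpLin_mul_same, hcomm, toLpLin_mul_same,
      LinearMap.comp_apply, hact j List.mem_cons_self]

end LocalIsometry

theorem single_to_multiple_observable_general {dA dB dA' dB' m : ℕ}
    (ψ : EuclideanSpace ℂ (Fin dA × Fin dB))
    (φ : EuclideanSpace ℂ (Fin dA' × Fin dB'))
    (A : Fin m → Matrix (Fin dA) (Fin dA) ℂ)
    (hA : ∀ j, ‖Matrix.toEuclideanCLM (𝕜 := ℂ) (A j)‖ ≤ 1)
    (Atil : Fin m → Matrix (Fin dA') (Fin dA') ℂ)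
    (VA : Matrix (Fin dA') (Fin dA) ℂ) (hVA : VA.conjTranspose * VA = 1)
    (VB : Matrix (Fin dB') (Fin dB) ℂ)
    (δ : ℝ)
    (hstate : ‖Matrix.toEuclideanLin (VA ⊗ₖ VB) ψ - φ‖ ≤ δ)
    (hobs : ∀ j,
      ‖Matrix.toEuclideanLin ((VA ⊗ₖ VB) * (A j ⊗ₖ (1 : Matrix (Fin dB) (Fin dB) ℂ))) ψ -
        Matrix.toEuclideanLin (Atil j ⊗ₖ (1 : Matrix (Fin dB') (Fin dB') ℂ)) φ‖ ≤ δ)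
    (Btil : Fin m → Matrix (Fin dB') (Fin dB') ℂ)
    (hBnorm : ∀ j, ‖Matrix.toEuclideanCLM (𝕜 := ℂ) (Btil j)‖ ≤ 1)
    (hBact : ∀ j,
      Matrix.toEuclideanLin (Atil j ⊗ₖ (1 : Matrix (Fin dB') (Fin dB') ℂ)) φ =
        Matrix.toEuclideanLin ((1 : Matrix (Fin dA') (Fin dA') ℂ) ⊗ₖ Btil j) φ) :
    ‖Matrix.toEuclideanLin
        ((VA ⊗ₖ VB) * (((List.finRange m).map A).prod ⊗ₖ (1 : Matrix (Fin dB) (Fin dB) ℂ))) ψ -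
      Matrix.toEuclideanLin
        (((List.finRange m).map Atil).prod ⊗ₖ (1 : Matrix (Fin dB') (Fin dB') ℂ)) φ‖ ≤
      (2 * m + 1) * δ := by
  have hA' (j : Fin m) : ‖A j‖ ≤ 1 := (cstar_norm_def _).trans_le (hA j)
  have hB' (j : Fin m) : ‖Btil j‖ ≤ 1 := (cstar_norm_def _).trans_le (hBnorm j)
  set L := List.finRange m
  set Q := (L.reverse.map Btil).prod
  have hQ : ‖Q‖ ≤ 1 := List.norm_prod_le_one l2_opNorm_one_le (by simpa using fun j _ => hB' j)
  have hdefect : transferDefect (VA ⊗ₖ VB) (L.map A).prod Q ψ ≤ m * (2 * δ) := by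
    have hstep (j : Fin m) : transferDefect (VA ⊗ₖ VB) (A j) (Btil j) ψ ≤ 2 * δ :=
      transferDefect_le_of_approx (hB' j) hstate (hobs j) (hBact j)
    have := transferDefect_list_prod_le VB hVA A Btil ψ (L := L)
      (fun j _ => hA' j) (fun j _ => hB' j) (fun j _ => hstep j)
    rwa [List.length_finRange] at this
  have hact : toEuclideanLin ((L.map Atil).prod ⊗ₖ (1 : Matrix (Fin dB') (Fin dB') ℂ)) φ =
      toEuclideanLin ((1 : Matrix (Fin dA') (Fin dA') ℂ) ⊗ₖ Q) φ :=
    toEuclideanLin_list_prod_kronecker_one_apply Atil Btil φ fun j _ => hBact j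
  calc _ = ‖toEuclideanLin ((VA ⊗ₖ VB) * ((L.map A).prod ⊗ₖ (1 : Matrix (Fin dB) (Fin dB) ℂ))) ψ -
        toEuclideanLin ((1 : Matrix (Fin dA') (Fin dA') ℂ) ⊗ₖ Q) φ‖ := by rw [hact]
    _ ≤ transferDefect (VA ⊗ₖ VB) (L.map A).prod Q ψ + ‖toEuclideanLin (VA ⊗ₖ VB) ψ - φ‖ :=
        sub_le_iff_le_add'.mp (abs_sub_le_iff.mp (abs_norm_sub_sub_transferDefect_le _ _ hQ ψ φ)).1
    _ ≤ m * (2 * δ) + δ := add_le_add hdefect hstate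
    _ = (2 * m + 1) * δ := by ring

/-- lifting a self-testing guarantee for single operators to products.
If the local isometry `V = V_A ⊗ V_B` carries `ψ` δ-close to `φ` and each `(A_j ⊗ I)ψ`
δ-close to `(Ã_j ⊗ I)φ`, with `‖A_j‖ ≤ 1`, and each `Ã_j` acts on `φ` as some `B̃_j` on the
other factor with `‖B̃_j‖ ≤ 1`, then `V(A₁⋯A_m ⊗ I)ψ` is `(2m+1)δ`-close to
`(Ã₁⋯Ã_m ⊗ I)φ`. -/
theorem single_to_multiple_observable {dA dB dA' dB' m : ℕ} (hm : 1 < m)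
    (ψ : EuclideanSpace ℂ (Fin dA × Fin dB))
    (φ : EuclideanSpace ℂ (Fin dA' × Fin dB'))
    (A : Fin m → Matrix (Fin dA) (Fin dA) ℂ)
    (hA : ∀ j, ‖Matrix.toEuclideanCLM (𝕜 := ℂ) (A j)‖ ≤ 1)
    (Atil : Fin m → Matrix (Fin dA') (Fin dA') ℂ)
    (VA : Matrix (Fin dA') (Fin dA) ℂ) (hVA : VA.conjTranspose * VA = 1)
    (VB : Matrix (Fin dB') (Fin dB) ℂ) (hVB : VB.conjTranspose * VB = 1)
    (δ : ℝ)
    (hstate : ‖Matrix.toEuclideanLin (VA ⊗ₖ VB) ψ - φ‖ ≤ δ)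
    (hobs : ∀ j,
      ‖Matrix.toEuclideanLin ((VA ⊗ₖ VB) * (A j ⊗ₖ (1 : Matrix (Fin dB) (Fin dB) ℂ))) ψ -
        Matrix.toEuclideanLin (Atil j ⊗ₖ (1 : Matrix (Fin dB') (Fin dB') ℂ)) φ‖ ≤ δ)
    (Btil : Fin m → Matrix (Fin dB') (Fin dB') ℂ)
    (hBnorm : ∀ j, ‖Matrix.toEuclideanCLM (𝕜 := ℂ) (Btil j)‖ ≤ 1)
    (hBact : ∀ j,
      Matrix.toEuclideanLin (Atil j ⊗ₖ (1 : Matrix (Fin dB') (Fin dB') ℂ)) φ =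
        Matrix.toEuclideanLin ((1 : Matrix (Fin dA') (Fin dA') ℂ) ⊗ₖ Btil j) φ) :
    ‖Matrix.toEuclideanLin
        ((VA ⊗ₖ VB) * (((List.finRange m).map A).prod ⊗ₖ (1 : Matrix (Fin dB) (Fin dB) ℂ))) ψ -
      Matrix.toEuclideanLin
        (((List.finRange m).map Atil).prod ⊗ₖ (1 : Matrix (Fin dB') (Fin dB') ℂ)) φ‖ ≤
      (2 * m + 1) * δ :=
  single_to_multiple_observable_general ψ φ A hA Atil VA hVA VB δ hstate hobs Btil hBnorm hBact
end
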